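/- arXiv:2212.01666 — 3 statements merged into one kernel-verified Lean document; each statement's English description precedes it below -/
import Mathlib

section
/- Let C = {(b_i^C, d_i^C)}_{i=1}^n and D = {(b_i^D, d_i^D)}_{i=1}^n be two finite indexed families of points with b_i ≤ d_i (representing matched points of two persistence diagrams). Define the Betti curves β_C(t) = Σ_i I_{[b_i^C, d_i^C)}(t) and β_D(t) = Σ_i I_{[b_i^D, d_i^D)}(t). Then ‖β_C - β_D‖₁ ≤ 2 · Σ_i max(|b_i^D - b_i^C|, |d_i^D - d_i^C|). -/
open MeasureTheory Set
open scoped symmDiff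

/-!
By the triangle inequality, `|β_C - β_D|` is bounded pointwise by the sum over `i` of the
indicators of the symmetric differences `[bᶜᵢ, dᶜᵢ) ∆ [bᴰᵢ, dᴰᵢ)`. Each symmetric difference lies
in the union of the interval between the two births and the interval between the two deaths, so
its length is at most `|bᴰᵢ - bᶜᵢ| + |dᴰᵢ - dᶜᵢ|`, which is at most twice the larger of the two.
-/

theorem Set.Ico_symmDiff_Ico_subset {α : Type*} [LinearOrder α] (a b c d : α) :
    Ico a b ∆ Ico c d ⊆ Ico (min a c) (max a c) ∪ Ico (min b d) (max b d) := by
  intro t ht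
  simp only [mem_symmDiff, mem_union, mem_Ico, min_le_iff, lt_max_iff] at ht ⊢
  grind

theorem Real.volume_Ico_symmDiff_Ico_le (a b c d : ℝ) :
    volume (Ico a b ∆ Ico c d) ≤ ENNReal.ofReal (|c - a| + |d - b|) :=
  calc volume (Ico a b ∆ Ico c d)
      ≤ volume (Ico (min a c) (max a c)) + volume (Ico (min b d) (max b d)) :=
        (measure_mono (Ico_symmDiff_Ico_subset a b c d)).trans (measure_union_le _ _)
    _ = ENNReal.ofReal (|c - a| + |d - b|) := by
        rw [Real.volume_Ico, Real.volume_Ico, max_sub_min_eq_abs, max_sub_min_eq_abs,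
          ENNReal.ofReal_add (abs_nonneg _) (abs_nonneg _)]

theorem integral_abs_sum_indicator_sub_sum_indicator_le {X ι : Type*} [MeasurableSpace X]
    {μ : Measure X} (u : Finset ι) {s t : ι → Set X} (hs : ∀ i, MeasurableSet (s i))
    (ht : ∀ i, MeasurableSet (t i)) (hst : ∀ i, μ (s i ∆ t i) ≠ ⊤) :
    ∫ x, |∑ i ∈ u, (s i).indicator 1 x - ∑ i ∈ u, (t i).indicator (1 : X → ℝ) x| ∂μ ≤
      ∑ i ∈ u, μ.real (s i ∆ t i) := by
  have habs_sub : ∀ i x, |(s i).indicator 1 x - (t i).indicator (1 : X → ℝ) x|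
      = (s i ∆ t i).indicator 1 x := fun i x => by
    rw [← abs_indicator_symmDiff (s i) (t i) 1 x, abs_of_nonneg]
    exact indicator_nonneg (fun _ _ => zero_le_one) x
  have hpointwise : ∀ x, |∑ i ∈ u, (s i).indicator 1 x - ∑ i ∈ u, (t i).indicator (1 : X → ℝ) x|
      ≤ ∑ i ∈ u, (s i ∆ t i).indicator 1 x := fun x => by
    rw [← Finset.sum_sub_distrib]
    exact (Finset.abs_sum_le_sum_abs _ _).trans_eq (Finset.sum_congr rfl fun i _ => habs_sub i x)
  have hint : ∀ i, Integrable ((s i ∆ t i).indicator (1 : X → ℝ)) μ := fun i =>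
    (integrable_indicator_iff ((hs i).symmDiff (ht i))).2
      (integrableOn_const (hst i) (by simp))
  calc _ ≤ ∫ x, ∑ i ∈ u, (s i ∆ t i).indicator (1 : X → ℝ) x ∂μ :=
        integral_mono_of_nonneg (ae_of_all _ fun _ => abs_nonneg _)
          (integrable_finsetSum u fun i _ => hint i) (ae_of_all _ hpointwise)
    _ = ∑ i ∈ u, μ.real (s i ∆ t i) := by
        rw [integral_finsetSum u fun i _ => hint i]
        exact Finset.sum_congr rfl fun i _ => integral_indicator_one ((hs i).symmDiff (ht i))

theorem betti_curve_stability_general (n : ℕ)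
    (bC dC bD dD : Fin n → ℝ) :
    (∫ t : ℝ, |(∑ i, if t ∈ Set.Ico (bC i) (dC i) then (1:ℝ) else 0) -
        (∑ i, if t ∈ Set.Ico (bD i) (dD i) then (1:ℝ) else 0)|) ≤
      2 * ∑ i, max (|bD i - bC i|) (|dD i - dC i|) := by
  have hvol := fun i => Real.volume_Ico_symmDiff_Ico_le (bC i) (dC i) (bD i) (dD i)
  have hfin : ∀ i, volume (Ico (bC i) (dC i) ∆ Ico (bD i) (dD i)) ≠ ⊤ :=
    fun i => ne_top_of_le_ne_top ENNReal.ofReal_ne_top (hvol i)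
  have hindicator : ∀ a b t : ℝ, (if t ∈ Ico a b then (1 : ℝ) else 0) = (Ico a b).indicator 1 t :=
    fun a b t => by simp [indicator_apply]
  simp only [hindicator]
  calc _ ≤ ∑ i, volume.real (Ico (bC i) (dC i) ∆ Ico (bD i) (dD i)) :=
        integral_abs_sum_indicator_sub_sum_indicator_le _ (fun _ => measurableSet_Ico)
          (fun _ => measurableSet_Ico) hfin
    _ ≤ ∑ i, (|bD i - bC i| + |dD i - dC i|) := Finset.sum_le_sum fun i _ =>
        ENNReal.toReal_le_of_le_ofReal (by positivity) (hvol i)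
    _ ≤ 2 * ∑ i, max (|bD i - bC i|) (|dD i - dC i|) := by
        rw [Finset.mul_sum]
        exact Finset.sum_le_sum fun i _ => by
          linarith [le_max_left |bD i - bC i| |dD i - dC i|,
            le_max_right |bD i - bC i| |dD i - dC i|]

theorem betti_curve_stability (n : ℕ)
    (bC dC bD dD : Fin n → ℝ)
    (hC : ∀ i, bC i ≤ dC i) (hD : ∀ i, bD i ≤ dD i) :
    (∫ t : ℝ, |(∑ i, if t ∈ Set.Ico (bC i) (dC i) then (1:ℝ) else 0) -
        (∑ i, if t ∈ Set.Ico (bD i) (dD i) then (1:ℝ) else 0)|) ≤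
      2 * ∑ i, max (|bD i - bC i|) (|dD i - dC i|) :=
  betti_curve_stability_general n bC dC bD dD
end

section
/- Let K be a finite set of cells, each cell σ having a dimension dim(σ) ∈ ℕ and two filtration vectors F(σ), F'(σ) ∈ [0, f_∞]ⁿ with ‖F(σ) − F'(σ)‖_∞ ≤ ε and F'(σ) ≥ F(σ) coordinatewise. Define ECP(v) = Σ_{σ : F(σ) ≤ v} (−1)^{dim σ} and ECP'(v) = Σ_{σ : F'(σ) ≤ v} (−1)^{dim σ} for v ∈ [0, f_∞]ⁿ. Then ∫_{[0,f_∞]ⁿ} |ECP(v) − ECP'(v)| dv ≤ |K| · n · ε · f_∞^{n−1}. -/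
/-! A cell `σ` contributes to `ECP(v) - ECP'(v)` only when exactly one of `F σ ≤ v`, `F' σ ≤ v`
holds, i.e. when `v` lies in the symmetric difference of the orthants above `F σ` and `F' σ`.
That symmetric difference is covered by the slabs `{v | v i ∈ uIcc (F σ i) (F' σ i)}`, one per
coordinate `i`, and each slab meets the cube `[0, f_∞]ⁿ` in volume at most `|F' σ i - F σ i| · f_∞ⁿ⁻¹`. -/

open MeasureTheory Set
open scoped symmDiff

theorem measureReal_univ_pi {ι : Type*} [Fintype ι] (s : ι → Set ℝ) :
    volume.real (univ.pi s) = ∏ i, volume.real (s i) := by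
  simp only [measureReal_def, volume_pi_pi, ENNReal.toReal_prod]

theorem Ici_symmDiff_Ici_subset {ι α : Type*} [LinearOrder α] (x y : ι → α) :
    Ici x ∆ Ici y ⊆ ⋃ i, {v | v i ∈ uIcc (x i) (y i)} := by
  intro v hv
  simp only [mem_symmDiff, mem_Ici, Pi.le_def, not_forall, not_le] at hv
  simp only [mem_iUnion, mem_ofPred_eq]
  rcases hv with ⟨hx, i, hi⟩ | ⟨hy, i, hi⟩
  · exact ⟨i, Icc_subset_uIcc ⟨hx i, hi.le⟩⟩
  · exact ⟨i, Icc_subset_uIcc' ⟨hy i, hi.le⟩⟩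

section Cube

variable {ι : Type*} [Fintype ι] {L : ℝ}

theorem measureReal_slab_inter_cube_le (hL : 0 ≤ L) (i : ι) (a b : ℝ) :
    volume.real ({v : ι → ℝ | v i ∈ uIcc a b} ∩ Icc 0 fun _ => L) ≤
      |b - a| * L ^ (Fintype.card ι - 1) := by
  classical
  set slab := univ.pi (Function.update (fun _ => Icc 0 L) i (uIcc a b))
  have hsub : {v : ι → ℝ | v i ∈ uIcc a b} ∩ Icc 0 (fun _ => L) ⊆ slab := by
    rintro v ⟨hi, h0, hL⟩ j -
    rcases eq_or_ne j i with rfl | hj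
    · simpa using hi
    · simpa [hj] using ⟨h0 j, hL j⟩
  have hslab : volume slab ≠ ⊤ := by
    rw [volume_pi_pi]
    exact ENNReal.prod_ne_top fun j _ => by rcases eq_or_ne j i with rfl | hj <;> simp [*]
  calc _ ≤ volume.real slab := measureReal_mono hsub hslab
    _ = |b - a| * L ^ (Fintype.card ι - 1) := by
      rw [measureReal_univ_pi, Fintype.prod_eq_mul_prod_compl i, Function.update_self,
        Real.volume_real_interval, Finset.prod_congr rfl fun j hj => by
          rw [Function.update_of_ne (by simpa using hj), Real.volume_real_Icc_of_le hL, sub_zero],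
        Finset.prod_const, Finset.card_compl, Finset.card_singleton]

theorem measureReal_Ici_symmDiff_Ici_inter_cube_le (hL : 0 ≤ L) (x y : ι → ℝ) :
    volume.real ((Ici x ∆ Ici y) ∩ Icc 0 fun _ => L) ≤
      ∑ i, |y i - x i| * L ^ (Fintype.card ι - 1) := by
  calc _ ≤ volume.real (⋃ i, {v : ι → ℝ | v i ∈ uIcc (x i) (y i)} ∩ Icc 0 fun _ => L) := by
        rw [← iUnion_inter]
        exact measureReal_mono (inter_subset_inter_left _ (Ici_symmDiff_Ici_subset x y))
          (measure_ne_top_of_subset inter_subset_right isCompact_Icc.measure_lt_top.ne)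
    _ ≤ _ := (measureReal_iUnion_fintype_le _).trans
        (Finset.sum_le_sum fun i _ => measureReal_slab_inter_cube_le hL i _ _)

end Cube

section EulerCharProfile

variable {Cell ι : Type*} [Fintype Cell] [Fintype ι]

noncomputable def eulerCharProfile (dimc : Cell → ℕ) (F : Cell → ι → ℝ) (v : ι → ℝ) : ℝ :=
  ∑ σ, if ∀ i, F σ i ≤ v i then (-1 : ℝ) ^ dimc σ else 0

theorem abs_eulerCharProfile_sub_le (dimc : Cell → ℕ) (F F' : Cell → ι → ℝ) (v : ι → ℝ) :
    |eulerCharProfile dimc F v - eulerCharProfile dimc F' v| ≤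
      ∑ σ, (Ici (F σ) ∆ Ici (F' σ)).indicator 1 v := by
  rw [eulerCharProfile, eulerCharProfile, ← Finset.sum_sub_distrib]
  refine (Finset.abs_sum_le_sum_abs _ _).trans (Finset.sum_le_sum fun σ _ => ?_)
  by_cases h : ∀ i, F σ i ≤ v i <;> by_cases h' : ∀ i, F' σ i ≤ v i <;>
    simp [h, h', mem_symmDiff, Pi.le_def]

theorem integral_cube_abs_eulerCharProfile_sub_le {L : ℝ} (hL : 0 ≤ L) (dimc : Cell → ℕ)
    (F F' : Cell → ι → ℝ) :
    ∫ v in Icc 0 (fun _ => L), |eulerCharProfile dimc F v - eulerCharProfile dimc F' v| ≤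
      ∑ σ, ∑ i, |F' σ i - F σ i| * L ^ (Fintype.card ι - 1) := by
  have : IsFiniteMeasure (volume.restrict (Icc (0 : ι → ℝ) fun _ => L)) :=
    isFiniteMeasure_restrict.mpr isCompact_Icc.measure_lt_top.ne
  have hS : ∀ σ, MeasurableSet (Ici (F σ) ∆ Ici (F' σ)) := fun σ =>
    measurableSet_Ici.symmDiff measurableSet_Ici
  calc _ ≤ ∫ v in Icc 0 (fun _ => L), ∑ σ, (Ici (F σ) ∆ Ici (F' σ)).indicator 1 v :=
        integral_mono_of_nonneg (.of_forall fun _ => abs_nonneg _)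
          (integrable_finsetSum _ fun σ _ => (integrable_const 1).indicator (hS σ))
          (.of_forall (abs_eulerCharProfile_sub_le dimc F F'))
    _ = ∑ σ, volume.real ((Ici (F σ) ∆ Ici (F' σ)) ∩ Icc 0 fun _ => L) := by
        rw [integral_finsetSum _ fun σ _ => (integrable_const 1).indicator (hS σ)]
        simp only [integral_indicator_one (hS _), measureReal_restrict_apply (hS _)]
    _ ≤ _ := Finset.sum_le_sum fun σ _ => measureReal_Ici_symmDiff_Ici_inter_cube_le hL _ _

end EulerCharProfile

theorem ecp_truncated_stability_general (n : ℕ) (Cell : Type) [Fintype Cell]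
    (dimc : Cell → ℕ) (F F' : Cell → (Fin n → ℝ)) (ε finf : ℝ)
    (hfinf : 0 < finf)
    (hpert : ∀ σ i, |F' σ i - F σ i| ≤ ε) :
    (∫ v in {v : Fin n → ℝ | ∀ i, 0 ≤ v i ∧ v i ≤ finf},
        |(∑ σ : Cell, if ∀ i, F σ i ≤ v i then (-1 : ℝ) ^ (dimc σ) else 0) -
         (∑ σ : Cell, if ∀ i, F' σ i ≤ v i then (-1 : ℝ) ^ (dimc σ) else 0)|) ≤
      (Fintype.card Cell : ℝ) * n * ε * finf ^ (n - 1) := by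
  have hcube : {v : Fin n → ℝ | ∀ i, 0 ≤ v i ∧ v i ≤ finf} = Icc 0 fun _ => finf := by
    ext v
    simp [Pi.le_def, forall_and]
  calc _ = ∫ v in Icc 0 (fun _ => finf),
          |eulerCharProfile dimc F v - eulerCharProfile dimc F' v| := by
        -- the statement decides `∀ i : Fin n, _` by `Nat.decidableForallFin`, not via `Fintype`
        rw [hcube]; unfold eulerCharProfile; congr!
    _ ≤ ∑ σ, ∑ i, |F' σ i - F σ i| * finf ^ (Fintype.card (Fin n) - 1) :=
        integral_cube_abs_eulerCharProfile_sub_le hfinf.le dimc F F'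
    _ ≤ ∑ _σ : Cell, ∑ _i : Fin n, ε * finf ^ (n - 1) := by
        rw [Fintype.card_fin]
        gcongr with σ _ i _
        exact hpert σ i
    _ = (Fintype.card Cell : ℝ) * n * ε * finf ^ (n - 1) := by
        simp only [Finset.sum_const, Finset.card_univ, Fintype.card_fin, nsmul_eq_mul]
        ring

theorem ecp_truncated_stability (n : ℕ) (Cell : Type) [Fintype Cell]
    (dimc : Cell → ℕ) (F F' : Cell → (Fin n → ℝ)) (ε finf : ℝ)
    (hε : 0 < ε) (hfinf : 0 < finf)
    (hF : ∀ σ i, 0 ≤ F σ i ∧ F σ i ≤ finf)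
    (hF' : ∀ σ i, 0 ≤ F' σ i ∧ F' σ i ≤ finf)
    (hpert : ∀ σ i, |F' σ i - F σ i| ≤ ε)
    (hmono : ∀ σ i, F σ i ≤ F' σ i) :
    (∫ v in {v : Fin n → ℝ | ∀ i, 0 ≤ v i ∧ v i ≤ finf},
        |(∑ σ : Cell, if ∀ i, F σ i ≤ v i then (-1 : ℝ) ^ (dimc σ) else 0) -
         (∑ σ : Cell, if ∀ i, F' σ i ≤ v i then (-1 : ℝ) ^ (dimc σ) else 0)|) ≤
      (Fintype.card Cell : ℝ) * n * ε * finf ^ (n - 1) :=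
  ecp_truncated_stability_general n Cell dimc F F' ε finf hfinf hpert
end

section
/- Let EC : ℝ → ℤ be a step function with jump points contained in [0, f_max], whose total number of jumps (counted with |jump size|, i.e. Σ over jump points of |jump|) is at most |K|. Sample it at the N grid points t_i = i·Δ, Δ = f_max/(N−1), i = 0,…,N−1, and let v(t) be the step function equal to EC(t_i) on [t_i, t_{i+1}). Then ‖EC − v‖₁ restricted to [0, f_max] is at most Δ·(|K|/2 + F), where F = Σ_{i=0}^{N−2} |EC(t_i) − EC(t_{i+1})|. -/
/-!
On a sampling cell `[u, v)` write `x, y, z` for the values of the step function `F` at `u`, `t`,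
`v`. The jumps in `(u, t]` and in `(t, v]` bound `|y - x|` and `|z - y|`, and together they make
up the variation `V` of `F` on `(u, v]`. Going from `x` to `y` directly, or via `z`, gives
`2 |y - x| ≤ V + |z - x|`, so the error on the cell is at most `(v - u) (V + |z - x|) / 2`.
The variations over the cells of a grid add up to at most the total variation `∑ |w j|`.
-/

open MeasureTheory Set Finset

namespace StepFunction

variable {ι : Type*} [Fintype ι] (a w : ι → ℝ)

noncomputable def stepFn (t : ℝ) : ℝ := ∑ j, if a j ≤ t then w j else 0

/-- Total size of the jumps of `stepFn a w` in `(u, v]`; it bounds the variation there. -/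
noncomputable def jumpVariation (u v : ℝ) : ℝ := ∑ j, if a j ∈ Ioc u v then |w j| else 0

theorem jumpVariation_le_sum_abs (u v : ℝ) : jumpVariation a w u v ≤ ∑ j, |w j| :=
  sum_le_sum fun j _ => by split_ifs <;> simp

theorem jumpVariation_add {u t v : ℝ} (hut : u ≤ t) (htv : t ≤ v) :
    jumpVariation a w u t + jumpVariation a w t v = jumpVariation a w u v := by
  simp only [jumpVariation, ← sum_add_distrib, Set.mem_Ioc]
  refine sum_congr rfl fun j _ => ?_
  split_ifs <;> grind

theorem sum_range_jumpVariation {g : ℕ → ℝ} (hg : Monotone g) (n : ℕ) :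
    ∑ i ∈ range n, jumpVariation a w (g i) (g (i + 1)) = jumpVariation a w (g 0) (g n) := by
  induction n with
  | zero => simp [jumpVariation]
  | succ n ih =>
    rw [sum_range_succ, ih, jumpVariation_add a w (hg (Nat.zero_le n)) (hg n.le_succ)]

theorem abs_stepFn_sub_le {u v : ℝ} (huv : u ≤ v) :
    |stepFn a w v - stepFn a w u| ≤ jumpVariation a w u v := by
  simp only [stepFn, jumpVariation, ← sum_sub_distrib]
  refine (abs_sum_le_sum_abs _ _).trans (sum_le_sum fun j _ => ?_)
  simp only [Set.mem_Ioc]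
  split_ifs <;> grind

theorem two_mul_abs_stepFn_sub_le {u t v : ℝ} (hut : u ≤ t) (htv : t ≤ v) :
    2 * |stepFn a w t - stepFn a w u| ≤
      jumpVariation a w u v + |stepFn a w u - stepFn a w v| := by
  have hleft := abs_stepFn_sub_le a w hut
  have hright := abs_stepFn_sub_le a w htv
  have hvia := abs_sub_le (stepFn a w t) (stepFn a w v) (stepFn a w u)
  rw [← jumpVariation_add a w hut htv]
  rw [abs_sub_comm (stepFn a w t) (stepFn a w v), abs_sub_comm (stepFn a w v) (stepFn a w u)] at hvia
  linarith

theorem setIntegral_abs_stepFn_sub_le {u v : ℝ} (huv : u ≤ v) :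
    ∫ t in Ico u v, |stepFn a w t - stepFn a w u| ≤
      (v - u) * ((jumpVariation a w u v + |stepFn a w u - stepFn a w v|) / 2) := by
  have hbound : ∀ t ∈ Ico u v, ‖|stepFn a w t - stepFn a w u|‖ ≤
      (jumpVariation a w u v + |stepFn a w u - stepFn a w v|) / 2 := fun t ht => by
    rw [Real.norm_eq_abs, abs_abs]
    linarith [two_mul_abs_stepFn_sub_le a w ht.1 ht.2.le]
  calc ∫ t in Ico u v, |stepFn a w t - stepFn a w u|
      ≤ ‖∫ t in Ico u v, |stepFn a w t - stepFn a w u|‖ := le_abs_self _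
    _ ≤ _ := norm_setIntegral_le_of_norm_le_const (by simp) hbound
    _ = _ := by rw [Measure.real, Real.volume_Ico, ENNReal.toReal_ofReal (by linarith), mul_comm]

theorem sum_setIntegral_abs_stepFn_sub_le {δ : ℝ} (hδ : 0 ≤ δ) (n : ℕ) :
    ∑ i ∈ range n, ∫ t in Ico ((i : ℝ) * δ) (((i : ℝ) + 1) * δ),
        |stepFn a w t - stepFn a w ((i : ℝ) * δ)| ≤
      δ / 2 * (∑ j, |w j| +
        ∑ i ∈ range n, |stepFn a w ((i : ℝ) * δ) - stepFn a w (((i : ℝ) + 1) * δ)|) := by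
  have hgrid : Monotone fun i : ℕ => (i : ℝ) * δ :=
    fun i k hik => mul_le_mul_of_nonneg_right (Nat.cast_le.mpr hik) hδ
  have hcells : ∑ i ∈ range n, jumpVariation a w ((i : ℝ) * δ) (((i : ℝ) + 1) * δ) ≤
      ∑ j, |w j| := by
    have := sum_range_jumpVariation a w hgrid n
    push_cast at this
    exact this ▸ jumpVariation_le_sum_abs a w _ _
  calc _ ≤ ∑ i ∈ range n, δ / 2 *
          (jumpVariation a w ((i : ℝ) * δ) (((i : ℝ) + 1) * δ) +
            |stepFn a w ((i : ℝ) * δ) - stepFn a w (((i : ℝ) + 1) * δ)|) :=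
        sum_le_sum fun i _ => (setIntegral_abs_stepFn_sub_le a w (by nlinarith)).trans_eq
          (by ring)
    _ ≤ _ := by
        rw [← mul_sum, sum_add_distrib]
        gcongr

end StepFunction

open StepFunction in
theorem ecc_vectorization_bound_general (K N : ℕ) (hN : 2 ≤ N) (fmax : ℝ) (hfmax : 0 < fmax)
    (a : Fin K → ℝ) (s : Fin K → ℤ)
    (hs : ∀ i, |s i| = 1) :
    ∑ i ∈ Finset.range (N - 1),
        ∫ t in Set.Ico ((i : ℝ) * (fmax / (N - 1))) (((i : ℝ) + 1) * (fmax / (N - 1))),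
          |((∑ j, if a j ≤ t then s j else 0 : ℤ) : ℝ) -
           ((∑ j, if a j ≤ (i : ℝ) * (fmax / (N - 1)) then s j else 0 : ℤ) : ℝ)| ≤
      (fmax / (N - 1)) * ((K : ℝ) / 2 +
        ∑ i ∈ Finset.range (N - 1),
          |((∑ j, if a j ≤ (i : ℝ) * (fmax / (N - 1)) then s j else 0 : ℤ) : ℝ) -
           ((∑ j, if a j ≤ ((i : ℝ) + 1) * (fmax / (N - 1)) then s j else 0 : ℤ) : ℝ)|) := by
  have hδ : 0 ≤ fmax / ((N : ℝ) - 1) := by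
    have : (2 : ℝ) ≤ N := by exact_mod_cast hN
    exact div_nonneg hfmax.le (by linarith)
  have hcast : ∀ t, ((∑ j, if a j ≤ t then s j else 0 : ℤ) : ℝ) = stepFn a (s ·) t := fun t => by
    simp [stepFn, apply_ite (Int.cast : ℤ → ℝ)]
  have htotal : ∑ j, |(s j : ℝ)| = K := by simp [← Int.cast_abs, hs]
  simp only [hcast]
  have hgrid := sum_setIntegral_abs_stepFn_sub_le a (s ·) hδ (N - 1)
  rw [htotal] at hgrid
  refine hgrid.trans ?_
  have hsamples := sum_nonneg fun i (_ : i ∈ range (N - 1)) =>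
    abs_nonneg (stepFn a (s ·) ((i : ℝ) * (fmax / (N - 1))) -
      stepFn a (s ·) (((i : ℝ) + 1) * (fmax / (N - 1))))
  linarith [mul_nonneg hδ hsamples]

theorem ecc_vectorization_bound (K N : ℕ) (hN : 2 ≤ N) (fmax : ℝ) (hfmax : 0 < fmax)
    (a : Fin K → ℝ) (s : Fin K → ℤ)
    (ha : ∀ i, 0 ≤ a i ∧ a i ≤ fmax) (hs : ∀ i, |s i| = 1) :
    ∑ i ∈ Finset.range (N - 1),
        ∫ t in Set.Ico ((i : ℝ) * (fmax / (N - 1))) (((i : ℝ) + 1) * (fmax / (N - 1))),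
          |((∑ j, if a j ≤ t then s j else 0 : ℤ) : ℝ) -
           ((∑ j, if a j ≤ (i : ℝ) * (fmax / (N - 1)) then s j else 0 : ℤ) : ℝ)| ≤
      (fmax / (N - 1)) * ((K : ℝ) / 2 +
        ∑ i ∈ Finset.range (N - 1),
          |((∑ j, if a j ≤ (i : ℝ) * (fmax / (N - 1)) then s j else 0 : ℤ) : ℝ) -
           ((∑ j, if a j ≤ ((i : ℝ) + 1) * (fmax / (N - 1)) then s j else 0 : ℤ) : ℝ)|) :=
  ecc_vectorization_bound_general K N hN fmax hfmax a s hs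
end
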